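/- arXiv:math/0212165 — 6 statements merged into one kernel-verified Lean document; each statement's English description precedes it below -/
import Mathlib

section
/- Let G be a finite connected graph with transition matrix P for simple random walk. Then τ(G) = (∏_{x∈V(G)} deg_G(x) / ∑_{x∈V(G)} deg_G(x)) · det'(I - P), where det' denotes the product of the nonzero eigenvalues. -/
open Filter Finset Topology

/-- The relation on vertices generated by the edges in `T`. -/
def treeRel {V E : Type*} (ends : E → Sym2 V) (T : Finset E) (x y : V) : Prop :=
  ∃ e ∈ T, ends e = s(x, y)

/-- `T` is a spanning tree of the multigraph with edge-endpoint map `ends`. -/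
def IsSpanningTree {V E : Type*} [Fintype V] (ends : E → Sym2 V) (T : Finset E) : Prop :=
  T.card + 1 = Fintype.card V ∧ ∀ x y : V, Relation.ReflTransGen (treeRel ends T) x y

/-- The complexity (number of spanning trees) of the multigraph. -/
noncomputable def treeCount {V E : Type*} [Fintype V] [Fintype E] (ends : E → Sym2 V) : ℕ :=
  Nat.card {T : Finset E // IsSpanningTree ends T}

/-- The degree of a vertex in a multigraph (loops count twice). -/
noncomputable def mdeg {V E : Type*} [Fintype E] [DecidableEq V] (ends : E → Sym2 V) (x : V) :
    ℕ :=
  ∑ e : E, (if ends e = s(x, x) then 2 else if x ∈ ends e then 1 else 0)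

/-- The transition matrix of simple random walk on the multigraph. -/
noncomputable def transMat {V E : Type*} [Fintype V] [Fintype E] [DecidableEq V]
    (ends : E → Sym2 V) : Matrix V V ℝ :=
  Matrix.of fun x y =>
    (∑ e : E, if ends e = s(x, y) then (if x = y then (2 : ℝ) else 1) else 0) / (mdeg ends x)

/-- `det'`: the product of the nonzero (complex) eigenvalues of a real matrix,
with multiplicity. -/
noncomputable def detPrime {V : Type*} [Fintype V] [DecidableEq V] (M : Matrix V V ℝ) : ℂ :=
  (((M.map (Complex.ofReal)).charpoly.roots).filter (· ≠ 0)).prod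

/-!
Write the Laplacian as `L = B Bᵀ` for an oriented incidence matrix `B`, so that
`I - P = D⁻¹ L` with `D` the diagonal degree matrix. Since `L 1 = 0`, zero is an eigenvalue of
`I - P`; when it is simple, the product of the nonzero eigenvalues is `(-1)^(n-1)` times the linear coefficient of
the characteristic polynomial, i.e. the sum of the principal `(n-1)`-minors of `D⁻¹ L`. Each
such minor is `∏_{x ≠ v} deg(x)⁻¹` times the reduced Laplacian determinant, which by
Cauchy–Binet is the sum of the squares of the maximal minors of `B` with row `v` deleted. As `B` is
totally unimodular, such a square is `1` exactly when the chosen edges form a spanning tree and `0`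
otherwise, so every reduced Laplacian determinant equals `τ(G)`; connectivity makes it nonzero,
so zero is a simple eigenvalue.
-/

open Matrix Polynomial

namespace Matrix

variable {ι γ R : Type*} [Fintype ι] [DecidableEq ι] [Fintype γ] [CommRing R]

theorem det_mul_eq_sum_prod_mul_det_submatrix (M : Matrix ι γ R) (N : Matrix γ ι R) :
    det (M * N) = ∑ f : ι → γ, (∏ i, N (f i) i) * det (M.submatrix id f) := by
  simp only [det_apply', mul_apply, prod_univ_sum, Fintype.piFinset_univ, mul_sum]
  rw [sum_comm]
  refine sum_congr rfl fun f _ => sum_congr rfl fun σ _ => ?_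
  simp only [submatrix_apply, id_eq, prod_mul_distrib]
  ring

variable [DecidableEq γ]

theorem det_mul_eq_sum_embedding (M : Matrix ι γ R) (N : Matrix γ ι R) :
    det (M * N) = ∑ f : ι ↪ γ, (∏ i, N (f i) i) * det (M.submatrix id f) := by
  rw [det_mul_eq_sum_prod_mul_det_submatrix, ← sum_filter_of_ne (p := Function.Injective),
    sum_subtype _ (p := Function.Injective) (by simp),
    ← (Equiv.subtypeInjectiveEquivEmbedding ι γ).symm.sum_comp]
  · rfl
  intro f _ hf
  by_contra hinj
  obtain ⟨i, j, hfij, hij⟩ := Function.not_injective_iff.mp hinj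
  exact hf (mul_eq_zero_of_right _ (det_zero_of_column_eq hij fun k => by simp [hfij]))

/-- Cauchy–Binet, summed over injections instead of over column sets: each column set of size
`card ι` is the image of `(card ι)!` injections, all contributing the same product. -/
theorem factorial_mul_det_mul (M : Matrix ι γ R) (N : Matrix γ ι R) :
    ((Fintype.card ι).factorial : R) * det (M * N) =
      ∑ f : ι ↪ γ, det (M.submatrix id f) * det (N.submatrix f id) := by
  have hperm (σ : Equiv.Perm ι) : det (M * N) =
      ∑ f : ι ↪ γ, (∏ i, N (f (σ i)) i) * (Equiv.Perm.sign σ * det (M.submatrix id f)) := by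
    rw [det_mul_eq_sum_embedding, ← (Equiv.embeddingCongr σ.symm (Equiv.refl γ)).sum_comp]
    refine sum_congr rfl fun f _ => ?_
    rw [← det_permute']
    rfl
  rw [← Fintype.card_perm, ← Finset.card_univ, ← nsmul_eq_mul, ← sum_const,
    sum_congr rfl fun σ _ => hperm σ, sum_comm]
  refine sum_congr rfl fun f _ => ?_
  rw [det_apply' (N.submatrix f id), mul_sum]
  refine sum_congr rfl fun σ _ => ?_
  simp only [submatrix_apply, id_eq]
  ring

end Matrix

namespace Function.Embedding

variable {ι γ : Type*} [Fintype ι] [DecidableEq ι] [Fintype γ] [DecidableEq γ]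

noncomputable def mapUnivEqEquiv (S : Finset γ) : {f : ι ↪ γ // univ.map f = S} ≃ (ι ≃ S) where
  toFun f := Equiv.ofBijective
    (fun i => ⟨f.1 i, (Finset.ext_iff.mp f.2 _).mp (mem_map_of_mem f.1 (mem_univ i))⟩)
    ⟨fun i j h => f.1.injective (congrArg Subtype.val h), fun x => by
      obtain ⟨i, -, hi⟩ := Finset.mem_map.mp ((Finset.ext_iff.mp f.2 _).mpr x.2)
      exact ⟨i, Subtype.ext hi⟩⟩
  invFun e := ⟨e.toEmbedding.trans (Function.Embedding.subtype _), by
    ext x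
    simp only [Finset.mem_map, mem_univ, true_and, Function.Embedding.trans_apply,
      Equiv.coe_toEmbedding, Function.Embedding.coe_subtype]
    exact ⟨fun ⟨i, hi⟩ => hi ▸ (e i).2, fun hx => ⟨e.symm ⟨x, hx⟩, by simp⟩⟩⟩
  left_inv _ := rfl
  right_inv _ := by ext; rfl

theorem card_filter_map_univ_eq (S : Finset γ) (hS : S.card = Fintype.card ι) :
    #{f : ι ↪ γ | univ.map f = S} = (Fintype.card ι).factorial := by
  rw [← Fintype.card_subtype, Fintype.card_congr (mapUnivEqEquiv S),
    Fintype.card_equiv (Fintype.equivOfCardEq (by simp [hS]))]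

theorem card_filter_map_univ (P : Finset γ → Prop) [DecidablePred P]
    (hP : ∀ S, P S → S.card = Fintype.card ι) :
    #{f : ι ↪ γ | P (univ.map f)} = (Fintype.card ι).factorial * #{S | P S} := by
  rw [card_eq_sum_card_fiberwise (f := fun f => univ.map f) (t := {S | P S})
    (fun f hf => by simpa using hf), mul_comm, card_eq_sum_ones, sum_mul, one_mul]
  refine sum_congr rfl fun S hS => ?_
  rw [← card_filter_map_univ_eq S (hP S (mem_filter.mp hS).2), filter_filter]
  congr 1
  ext f
  simp only [mem_filter, mem_univ, true_and, and_iff_right_iff_imp]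
  rintro rfl
  exact (mem_filter.mp hS).2

end Function.Embedding

section SingleSubSingle

variable {m : Type*} [DecidableEq m]

theorem Pi.single_sub_single_apply_mem_range_signType {R : Type*} [Ring R] (a b x : m) :
    (Pi.single a 1 - Pi.single b 1 : m → R) x ∈ Set.range SignType.cast := by
  simp only [Pi.sub_apply, Pi.single_apply]
  split_ifs
  exacts [⟨0, by simp⟩, ⟨1, by simp⟩, ⟨-1, by simp⟩, ⟨0, by simp⟩]

theorem Pi.eq_or_eq_of_single_sub_single_apply_ne_zero {R : Type*} [Ring R] {a b x : m}
    (h : (Pi.single a 1 - Pi.single b 1 : m → R) x ≠ 0) : a ≠ b ∧ (x = a ∨ x = b) := by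
  refine ⟨fun hab => h (by simp [hab]), ?_⟩
  by_contra! hx
  exact h (by simp [hx.1, hx.2])

theorem Pi.single_sub_single_apply_mul_apply (a b x y : m) :
    (Pi.single a 1 - Pi.single b 1 : m → ℝ) x * (Pi.single a 1 - Pi.single b 1 : m → ℝ) y =
      (if x = y then (if s(a, b) = s(x, x) then (2 : ℝ) else if x ∈ s(a, b) then 1 else 0) else 0)
        - (if s(a, b) = s(x, y) then (if x = y then (2 : ℝ) else 1) else 0) := by
  simp only [Pi.sub_apply, Pi.single_apply, Sym2.eq_iff, Sym2.mem_iff]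
  split_ifs <;> grind

end SingleSubSingle

namespace Matrix

variable {m n R : Type*} [DecidableEq m] [CommRing R]

theorem isTotallyUnimodular_of_forall_transpose_eq_single_sub_single {A : Matrix m n R}
    (hA : ∀ j, ∃ a b, Aᵀ j = Pi.single a 1 - Pi.single b 1) : A.IsTotallyUnimodular := by
  choose a b hab using hA
  intro k
  induction k with
  | zero => exact fun _ _ _ _ => ⟨1, by simp⟩
  | succ k ih =>
    intro f g hf hg
    have hB (i j) : A.submatrix f g i j =
        (Pi.single (a (g j)) 1 - Pi.single (b (g j)) 1 : m → R) (f i) :=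
      congrFun (hab (g j)) (f i)
    by_cases hcol : ∃ j i, ∀ i', A.submatrix f g i' j ≠ 0 → i' = i
    · obtain ⟨j, i, hi⟩ := hcol
      rw [det_succ_column _ j, sum_eq_single i (fun i' _ hi' => by
        rw [not_imp_comm.mp (hi i') hi', mul_zero, zero_mul]) (by simp), submatrix_submatrix]
      obtain ⟨s, hs⟩ := hB i j ▸ Pi.single_sub_single_apply_mem_range_signType _ _ (f i)
      obtain ⟨t, ht⟩ := ih _ _ (hf.comp (Fin.succAbove_right_injective (p := i)))
        (hg.comp (Fin.succAbove_right_injective (p := j)))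
      exact ⟨(-1) ^ ((i : ℕ) + j) * s * t, by simp [hs, ht]⟩
    · -- every column meets both of its nonzero rows, so the columns sum to zero
      push Not at hcol
      suffices (A.submatrix f g)ᵀ *ᵥ 1 = 0 from ⟨0, by rw [SignType.coe_zero, ← det_transpose,
        det_eq_zero_of_mulVec_eq_zero_of_mem_nonZeroDivisors this (i := 0) (by simp)]⟩
      funext j
      obtain ⟨i₁, h₁, -⟩ := hcol j 0
      obtain ⟨i₂, h₂, h₂₁⟩ := hcol j i₁
      rw [hB] at h₁ h₂
      obtain ⟨-, h₁⟩ := Pi.eq_or_eq_of_single_sub_single_apply_ne_zero h₁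
      obtain ⟨-, h₂⟩ := Pi.eq_or_eq_of_single_sub_single_apply_ne_zero h₂
      have hsum (p q : Fin (k + 1)) :
          ∑ i, (Pi.single (f p) 1 - Pi.single (f q) 1 : m → R) (f i) = 0 := by
        simp [Pi.single_apply, hf.eq_iff, sum_sub_distrib]
      simp only [mulVec, dotProduct, transpose_apply, Pi.one_apply, mul_one, hB, Pi.zero_apply]
      rcases h₁ with h₁ | h₁ <;> rcases h₂ with h₂ | h₂
      · exact absurd (hf (h₂.trans h₁.symm)) h₂₁
      · rw [← h₁, ← h₂, hsum]
      · rw [← h₁, ← h₂, hsum]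
      · exact absurd (hf (h₂.trans h₁.symm)) h₂₁

theorem det_diagonal_mul_submatrix {ι κ : Type*} [Fintype ι] [DecidableEq ι] [Fintype κ]
    [DecidableEq κ] (d : ι → R) (L : Matrix ι ι R) (r : κ → ι) :
    det ((diagonal d * L).submatrix r r) = (∏ k, d (r k)) * det (L.submatrix r r) := by
  rw [show (diagonal d * L).submatrix r r = diagonal (d ∘ r) * L.submatrix r r by
    ext; simp [diagonal_mul], det_mul, det_diagonal]
  rfl

end Matrix

theorem Polynomial.prod_roots_filter_ne_zero {K : Type*} [Field K] [DecidableEq K] {p : K[X]}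
    (hp : p.Monic) (hsplit : p.Splits) (h0 : p.coeff 0 = 0) (h1 : p.coeff 1 ≠ 0) :
    (p.roots.filter (· ≠ 0)).prod = (-1) ^ (p.natDegree - 1) * p.coeff 1 := by
  set q := p.divX with hq_def
  have hpX : p = X * q := by simpa [h0] using (X_mul_divX_add p).symm
  have hq0 : q.coeff 0 ≠ 0 := by rwa [coeff_divX]
  have hq : q ≠ 0 := fun h => hq0 (by simp [h])
  have hqm : q.Monic := monic_X.of_mul_monic_left (hpX ▸ hp)
  have hqs : q.Splits := by rw [hpX] at hsplit; exact hsplit.of_X_mul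
  have hroots : p.roots = 0 ::ₘ q.roots := by
    rw [hpX, roots_mul (hpX ▸ hp.ne_zero), roots_X, Multiset.singleton_add]
  have hfilter : q.roots.filter (· ≠ 0) = q.roots :=
    Multiset.filter_eq_self.mpr fun a ha h => hq0 (by
      rwa [h, mem_roots hq, IsRoot, ← coeff_zero_eq_eval_zero] at ha)
  rw [hroots, Multiset.filter_cons_of_neg _ (by simp), hfilter, ← coeff_divX, ← hq_def,
    hqs.coeff_zero_eq_prod_roots_of_monic hqm, natDegree_divX_eq_natDegree_tsub_one,
    ← mul_assoc, ← pow_add, ← two_mul, pow_mul]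
  simp

theorem detPrime_eq_neg_one_pow_mul_charpoly_coeff_one {ι : Type*} [Fintype ι] [DecidableEq ι]
    {M : Matrix ι ι ℝ} (h0 : M.det = 0) (h1 : M.charpoly.coeff 1 ≠ 0) :
    detPrime M = (-1) ^ (Fintype.card ι - 1) * (M.charpoly.coeff 1 : ℂ) := by
  have hcoeff (k : ℕ) : (M.map Complex.ofReal).charpoly.coeff k = M.charpoly.coeff k := by
    rw [show M.map Complex.ofReal = M.map Complex.ofRealHom from rfl, charpoly_map, coeff_map]
    rfl
  rw [detPrime, prod_roots_filter_ne_zero (charpoly_monic _) (IsAlgClosed.splits _),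
    charpoly_natDegree_eq_dim, hcoeff]
  · have := det_eq_sign_charpoly_coeff M
    rw [hcoeff, Complex.ofReal_eq_zero]
    simpa [h0] using this
  · rw [hcoeff]
    exact_mod_cast h1

theorem Finset.powersetCard_card_sub_one_univ {α : Type*} [Fintype α] [DecidableEq α]
    [Nonempty α] :
    powersetCard (Fintype.card α - 1) univ = univ.image fun a : α => univ.erase a := by
  ext s
  simp only [mem_powersetCard, subset_univ, true_and, mem_image, mem_univ]
  constructor
  · intro hs
    obtain ⟨a, -, ha⟩ := exists_mem_notMem_of_card_lt_card (s := s) (t := univ)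
      (by rw [hs, card_univ]; exact Nat.sub_lt Fintype.card_pos one_pos)
    refine ⟨a, (eq_of_subset_of_card_le (fun x hx => ?_) ?_).symm⟩
    · exact mem_erase.mpr ⟨fun h => ha (h ▸ hx), mem_univ x⟩
    · simp [hs, card_erase_of_mem]
  · rintro ⟨a, rfl⟩
    simp [card_erase_of_mem]

theorem Finset.sum_prod_erase_inv {α K : Type*} [Fintype α] [DecidableEq α] [Field K] {d : α → K}
    (hd : ∀ a, d a ≠ 0) : ∑ a, ∏ x ∈ univ.erase a, (d x)⁻¹ = (∑ a, d a) / ∏ a, d a := by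
  rw [div_eq_mul_inv, sum_mul]
  refine sum_congr rfl fun a _ => ?_
  rw [← mul_prod_erase univ d (mem_univ a), mul_inv, ← mul_assoc, mul_inv_cancel₀ (hd a), one_mul,
    prod_inv_distrib]

section IncidenceMatrix

variable {V E : Type*}

/-- The oriented incidence matrix: edge `e` leaves `(ends e).out.1` and enters `(ends e).out.2`;
a loop gives a zero column. -/
noncomputable def incMat [DecidableEq V] (ends : E → Sym2 V) : Matrix V E ℝ :=
  (Matrix.of fun e => Pi.single (ends e).out.1 1 - Pi.single (ends e).out.2 1)ᵀ

theorem incMat_isTotallyUnimodular [DecidableEq V] (ends : E → Sym2 V) :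
    (incMat ends).IsTotallyUnimodular :=
  isTotallyUnimodular_of_forall_transpose_eq_single_sub_single fun _ => ⟨_, _, rfl⟩

theorem sum_mul_incMat_apply [Fintype V] [DecidableEq V] (ends : E → Sym2 V) (G : V → ℝ) (e : E) :
    ∑ x, G x * incMat ends x e = G (ends e).out.1 - G (ends e).out.2 := by
  simp [incMat, mul_sub, sum_sub_distrib, Pi.single_apply]

theorem incMat_transpose_mulVec_one [Fintype V] [DecidableEq V] (ends : E → Sym2 V) :
    (incMat ends)ᵀ *ᵥ 1 = 0 := by
  funext e
  simpa [mulVec, dotProduct, mul_comm] using sum_mul_incMat_apply ends 1 e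

theorem incMat_mul_transpose_apply [Fintype V] [DecidableEq V] [Fintype E] (ends : E → Sym2 V)
    (x y : V) :
    (incMat ends * (incMat ends)ᵀ) x y =
      (if x = y then (mdeg ends x : ℝ) else 0) -
        ∑ e : E, if ends e = s(x, y) then (if x = y then (2 : ℝ) else 1) else 0 := by
  have hout (e : E) : ends e = s((ends e).out.1, (ends e).out.2) := (Quot.out_eq _).symm
  simp only [Matrix.mul_apply, Matrix.transpose_apply, incMat, Matrix.of_apply]
  rw [sum_congr rfl fun e _ => by rw [Pi.single_sub_single_apply_mul_apply, ← hout],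
    sum_sub_distrib]
  split_ifs with hxy <;> simp [mdeg, hxy]

theorem one_sub_transMat_eq_diagonal_mul [Fintype V] [DecidableEq V] [Fintype E]
    (ends : E → Sym2 V) (hdeg : ∀ x, 0 < mdeg ends x) :
    1 - transMat ends =
      diagonal (fun x => (mdeg ends x : ℝ)⁻¹) * (incMat ends * (incMat ends)ᵀ) := by
  ext x y
  have hx : (mdeg ends x : ℝ) ≠ 0 := by exact_mod_cast (hdeg x).ne'
  rw [diagonal_mul, incMat_mul_transpose_apply, Matrix.sub_apply, one_apply, transMat, of_apply]
  split_ifs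
  · field_simp
  · simp [div_eq_inv_mul]

theorem det_one_sub_transMat [Fintype V] [DecidableEq V] [Fintype E] [Nonempty V]
    (ends : E → Sym2 V) (hdeg : ∀ x, 0 < mdeg ends x) : det (1 - transMat ends) = 0 := by
  refine det_eq_zero_of_mulVec_eq_zero_of_mem_nonZeroDivisors (v := 1) ?_
    (i := Classical.arbitrary V) (by simp)
  rw [one_sub_transMat_eq_diagonal_mul ends hdeg, ← mulVec_mulVec, ← mulVec_mulVec,
    incMat_transpose_mulVec_one, mulVec_zero, mulVec_zero]

instance (ends : E → Sym2 V) (T : Finset E) : Std.Symm (treeRel ends T) where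
  symm _ _ := fun ⟨e, he, h⟩ => ⟨e, he, h.trans Sym2.eq_swap⟩

theorem eq_of_reflTransGen_treeRel (ends : E → Sym2 V) {T : Finset E} {G : V → ℝ}
    (hG : ∀ e ∈ T, G (ends e).out.1 = G (ends e).out.2) {x y : V}
    (h : Relation.ReflTransGen (treeRel ends T) x y) : G x = G y := by
  induction h with
  | refl => rfl
  | tail _ hyz ih =>
    obtain ⟨e, he, hends⟩ := hyz
    have hout : s((ends e).out.1, (ends e).out.2) = s(_, _) := (Quot.out_eq _).trans hends
    rcases Sym2.eq_iff.mp hout with ⟨h1, h2⟩ | ⟨h1, h2⟩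
    · rw [ih, ← h1, ← h2, hG e he]
    · rw [ih, ← h1, ← h2, hG e he]

theorem vecMul_incMat_submatrix [Fintype V] [DecidableEq V] (ends : E → Sym2 V) {s : Finset V}
    {G : V → ℝ} (hG : ∀ x ∉ s, G x = 0) {κ : Type*} (c : κ → E) :
    (fun x : s => G x) ᵥ* (incMat ends).submatrix Subtype.val c =
      fun j => G (ends (c j)).out.1 - G (ends (c j)).out.2 := by
  funext j
  rw [← sum_mul_incMat_apply, vecMul, dotProduct]
  simp only [submatrix_apply]
  rw [sum_coe_sort s fun x => G x * incMat ends x (c j)]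
  exact sum_subset (subset_univ s) fun x _ hx => by rw [hG x hx, zero_mul]

theorem eq_zero_of_vecMul_incMat_submatrix_eq_zero [Fintype V] [DecidableEq V]
    (ends : E → Sym2 V) {v : V} {κ : Type*} {c : κ → E} {T : Finset E}
    (hT : ∀ e ∈ T, ∃ j, c j = e) (hconn : ∀ x y, Relation.ReflTransGen (treeRel ends T) x y)
    {g : univ.erase v → ℝ} (hg : g ᵥ* (incMat ends).submatrix Subtype.val c = 0) : g = 0 := by
  set G : V → ℝ := fun x => if h : x ∈ univ.erase v then g ⟨x, h⟩ else 0
  have hGg : (fun x : univ.erase v => G x) = g := funext fun x => dif_pos x.2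
  have hG : ∀ x ∉ univ.erase v, G x = 0 := fun x hx => dif_neg hx
  have hedge : ∀ e ∈ T, G (ends e).out.1 = G (ends e).out.2 := by
    intro e he
    obtain ⟨j, rfl⟩ := hT e he
    have := congrFun (vecMul_incMat_submatrix ends hG c) j
    rw [hGg, hg] at this
    exact sub_eq_zero.mp this.symm
  rw [← hGg]
  funext x
  rw [eq_of_reflTransGen_treeRel ends hedge (hconn x v), hG v (by simp), Pi.zero_apply]

theorem det_incMat_submatrix_ne_zero_iff [Fintype V] [DecidableEq V] (ends : E → Sym2 V) (v : V)
    (f : univ.erase v ↪ E) :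
    det ((incMat ends).submatrix Subtype.val f) ≠ 0 ↔
      ∀ x y, Relation.ReflTransGen (treeRel ends (univ.map f)) x y := by
  refine ⟨fun hdet => ?_, fun hconn hdet => ?_⟩
  · classical
    set R := Relation.ReflTransGen (treeRel ends (univ.map f))
    by_contra hdisc
    obtain ⟨x₀, hx₀⟩ : ∃ x₀, ¬R v x₀ := by
      by_contra! h
      exact hdisc fun x y => (Std.Symm.symm _ _ (h x)).trans (h y)
    -- the indicator of the component of `x₀` is a nonzero left kernel vector
    set G : V → ℝ := fun x => if R x₀ x then 1 else 0
    have hG : ∀ x ∉ univ.erase v, G x = 0 := fun x hx => by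
      obtain rfl : x = v := by simpa using hx
      exact if_neg fun h => hx₀ (Std.Symm.symm _ _ h)
    refine hdet (exists_vecMul_eq_zero_iff.mp ⟨fun x => G x, fun h => ?_, ?_⟩)
    · have hx₀v : x₀ ∈ univ.erase v := by
        simpa using fun h : x₀ = v => hx₀ (h ▸ Relation.ReflTransGen.refl)
      exact absurd Relation.ReflTransGen.refl (by simpa [G] using congrFun h ⟨x₀, hx₀v⟩)
    · rw [vecMul_incMat_submatrix ends hG]
      funext j
      have hedge : treeRel ends (univ.map f) (ends (f j)).out.1 (ends (f j)).out.2 :=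
        ⟨f j, mem_map_of_mem f (mem_univ j), (Quot.out_eq _).symm⟩
      by_cases h₁ : R x₀ (ends (f j)).out.1
      · have h₂ : R x₀ (ends (f j)).out.2 := h₁.tail hedge
        simp [G, h₁, h₂]
      · have h₂ : ¬R x₀ (ends (f j)).out.2 := fun h₂ => h₁ (h₂.tail (Std.Symm.symm _ _ hedge))
        simp [G, h₁, h₂]
  · obtain ⟨g, hg0, hg⟩ := exists_vecMul_eq_zero_iff.mpr hdet
    exact hg0 (eq_zero_of_vecMul_incMat_submatrix_eq_zero ends
      (fun e he => by simpa using he) hconn hg)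

open Classical in
theorem sq_det_incMat_submatrix [Fintype V] [DecidableEq V] (ends : E → Sym2 V) (v : V)
    (f : univ.erase v ↪ E) :
    det ((incMat ends).submatrix Subtype.val f) ^ 2 =
      if IsSpanningTree ends (univ.map f) then 1 else 0 := by
  have hcard : (univ.map f).card + 1 = Fintype.card V := by
    simp [Nat.sub_add_cancel (Fintype.card_pos_iff.mpr ⟨v⟩)]
  have htree :
      IsSpanningTree ends (univ.map f) ↔ det ((incMat ends).submatrix Subtype.val f) ≠ 0 := by
    rw [det_incMat_submatrix_ne_zero_iff]
    exact ⟨fun h => h.2, fun h => ⟨hcard, h⟩⟩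
  obtain ⟨s, hs⟩ := (isTotallyUnimodular_iff_fintype _).mp (incMat_isTotallyUnimodular ends) _
    Subtype.val f
  rw [if_congr htree rfl rfl, ← hs]
  cases s <;> simp

theorem det_incMat_mul_transpose_submatrix [Fintype V] [DecidableEq V] [Fintype E]
    (ends : E → Sym2 V) (v : V) :
    det ((incMat ends * (incMat ends)ᵀ).submatrix (Subtype.val : univ.erase v → V) Subtype.val) =
      treeCount ends := by
  classical
  set B := (incMat ends).submatrix (Subtype.val : univ.erase v → V) id
  have hterm (f : univ.erase v ↪ E) : det (B.submatrix id f) * det (Bᵀ.submatrix f id) =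
      if IsSpanningTree ends (univ.map f) then 1 else 0 := by
    rw [← transpose_submatrix, det_transpose, ← sq]
    exact sq_det_incMat_submatrix ends v f
  refine mul_left_cancel₀ (Nat.cast_ne_zero.mpr (Fintype.card (univ.erase v)).factorial_ne_zero) ?_
  rw [submatrix_mul _ _ _ id _ Function.bijective_id, ← transpose_submatrix, factorial_mul_det_mul,
    sum_congr rfl fun f _ => hterm f, sum_boole,
    Function.Embedding.card_filter_map_univ (IsSpanningTree ends), treeCount,
    Nat.card_eq_fintype_card, Fintype.card_subtype (IsSpanningTree ends), Nat.cast_mul]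
  intro S hS
  have := hS.1
  simp
  omega

theorem det_incMat_mul_transpose_submatrix_ne_zero [Fintype V] [DecidableEq V] [Fintype E]
    (ends : E → Sym2 V) (hconn : ∀ x y, Relation.ReflTransGen (treeRel ends univ) x y) (v : V) :
    det ((incMat ends * (incMat ends)ᵀ).submatrix (Subtype.val : univ.erase v → V) Subtype.val)
      ≠ 0 := by
  set B := (incMat ends).submatrix (Subtype.val : univ.erase v → V) id
  rw [submatrix_mul _ _ _ id _ Function.bijective_id, ← transpose_submatrix]
  intro hdet
  obtain ⟨g, hg0, hg⟩ := exists_vecMul_eq_zero_iff.mpr hdet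
  have hgB : g ᵥ* B = 0 := dotProduct_self_eq_zero.mp <| calc
    (g ᵥ* B) ⬝ᵥ (g ᵥ* B) = (g ᵥ* B) ⬝ᵥ (Bᵀ *ᵥ g) := by rw [mulVec_transpose]
    _ = (g ᵥ* (B * Bᵀ)) ⬝ᵥ g := by rw [dotProduct_mulVec, vecMul_vecMul]
    _ = 0 := by rw [hg, zero_dotProduct]
  exact hg0 (eq_zero_of_vecMul_incMat_submatrix_eq_zero ends (c := id) (fun e _ => ⟨e, rfl⟩)
    hconn hgB)

theorem treeCount_ne_zero [Fintype V] [DecidableEq V] [Nonempty V] [Fintype E]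
    (ends : E → Sym2 V) (hconn : ∀ x y, Relation.ReflTransGen (treeRel ends univ) x y) :
    treeCount ends ≠ 0 := by
  have := det_incMat_mul_transpose_submatrix_ne_zero ends hconn (Classical.arbitrary V)
  rw [det_incMat_mul_transpose_submatrix] at this
  exact_mod_cast this

theorem charpoly_one_sub_transMat_coeff_one [Fintype V] [DecidableEq V] [Nonempty V] [Fintype E]
    (ends : E → Sym2 V) (hdeg : ∀ x, 0 < mdeg ends x) :
    (1 - transMat ends).charpoly.coeff 1 =
      (-1) ^ (Fintype.card V - 1) *
        (treeCount ends * ((∑ x, (mdeg ends x : ℝ)) / ∏ x, (mdeg ends x : ℝ))) := by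
  have hcoeff := charpoly_coeff_eq_sum_minors (1 - transMat ends) _ (Nat.sub_le _ 1)
  rw [Nat.sub_sub_self Fintype.card_pos, powersetCard_card_sub_one_univ, sum_image
    ((erase_injOn univ).mono (by simp))] at hcoeff
  rw [hcoeff, one_sub_transMat_eq_diagonal_mul ends hdeg,
    ← sum_prod_erase_inv (K := ℝ) fun x => Nat.cast_ne_zero.mpr (hdeg x).ne']
  congr 1
  rw [mul_sum]
  refine sum_congr rfl fun v _ => ?_
  rw [det_diagonal_mul_submatrix, det_incMat_mul_transpose_submatrix,
    prod_coe_sort (univ.erase v) fun x => (mdeg ends x : ℝ)⁻¹, mul_comm]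

end IncidenceMatrix

/-- Proposition: for a finite connected multigraph `G` with random-walk transition matrix `P`,
`τ(G) = (∏_x deg(x) / ∑_x deg(x)) · det'(I - P)`. -/
theorem stmt1 {V E : Type*} [Fintype V] [Fintype E] [DecidableEq V] (ends : E → Sym2 V)
    (hconn : ∀ x y : V, Relation.ReflTransGen (treeRel ends (Finset.univ : Finset E)) x y)
    (hdeg : ∀ x : V, 0 < mdeg ends x) :
    (treeCount ends : ℂ) =
      ((∏ x : V, (mdeg ends x : ℂ)) / (∑ x : V, (mdeg ends x : ℂ))) *
        detPrime (1 - transMat ends) := by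
  rcases isEmpty_or_nonempty V with hV | hV
  · have : IsEmpty {T : Finset E // IsSpanningTree ends T} := ⟨fun T => by simpa using T.2.1⟩
    simp [treeCount]
  have hτ : (treeCount ends : ℝ) ≠ 0 := by exact_mod_cast treeCount_ne_zero ends hconn
  have hsum : (∑ x, (mdeg ends x : ℝ)) ≠ 0 := by
    exact_mod_cast (sum_pos (fun x _ => hdeg x) univ_nonempty).ne'
  have hprod : (∏ x, (mdeg ends x : ℝ)) ≠ 0 :=
    prod_ne_zero_iff.mpr fun x _ => by exact_mod_cast (hdeg x).ne'
  have hcoeff := charpoly_one_sub_transMat_coeff_one ends hdeg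
  rw [detPrime_eq_neg_one_pow_mul_charpoly_coeff_one (det_one_sub_transMat ends hdeg)
    (by simp [hcoeff, hτ, hsum, hprod]), hcoeff]
  push_cast
  rw [← mul_assoc ((-1) ^ _), ← mul_pow, neg_one_mul, neg_neg, one_pow, one_mul]
  have hsumC : (∑ x, (mdeg ends x : ℂ)) ≠ 0 := by exact_mod_cast hsum
  have hprodC : (∏ x, (mdeg ends x : ℂ)) ≠ 0 := by exact_mod_cast hprod
  field_simp
end

section
/- Let P be the transition matrix of a Markov chain on a countable state space, let α ∈ [0,1), and define Q := αI + (1-α)P. Let p_k(x) and q_k(x) be the k-step return probabilities to state x for P and Q respectively. Then ∑_{k≥1} q_k(x)/k = -log(1-α) + ∑_{k≥1} p_k(x)/k (as an identity in [0,∞]). -/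
open scoped ENNReal NNReal

/-- `k`-step transition probabilities of the Markov kernel `P` on a countable state space. -/
noncomputable def kpow {V : Type*} [DecidableEq V] (P : V → V → ℝ≥0∞) : ℕ → V → V → ℝ≥0∞
  | 0 => fun x y => if x = y then 1 else 0
  | (n + 1) => fun x y => ∑' z, P x z * kpow P n z y

/-!
Since `Q = (1-α) P + α I` and the two summands commute, the binomial theorem gives
`q_n(x) = ∑_{i+j=n} C(n,i) (1-α)^i α^j p_i(x)`. Dividing by `n` and using
`C(n,i)/n = C(n-1,i-1)/i`, the total weight of `p_i(x)` for `i ≥ 1` is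
`(1-α)^i / i · ∑_j C(i-1+j, j) α^j = (1-α)^i / i · (1-α)^(-i) = 1/i` (negative binomial series),
while the `i = 0` terms add up to `∑_n α^n / n = -log(1-α)`. All terms are nonnegative, so every
rearrangement is valid in `[0, ∞]`.
-/

open Finset

namespace ENNReal

theorem tsum_sum_antidiagonal_eq_tsum_prod (f : ℕ × ℕ → ℝ≥0∞) :
    ∑' n, ∑ p ∈ antidiagonal n, f p = ∑' p, f p := by
  rw [← HasAntidiagonal.sigmaAntidiagonalEquivProd.tsum_eq, ENNReal.tsum_sigma']
  simp_rw [← Finset.tsum_subtype]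
  rfl

theorem tsum_choose_mul_pow (a : ℝ≥0∞) (k : ℕ) :
    ∑' n, ((n + k).choose k : ℝ≥0∞) * a ^ n = (1 - a)⁻¹ ^ (k + 1) := by
  induction k with
  | zero => simp [ENNReal.tsum_geometric]
  | succ k ih =>
    have hpascal (n : ℕ) : ((n + (k + 1)).choose (k + 1) : ℝ≥0∞) * a ^ n =
        ∑ p ∈ antidiagonal n, ((p.1 + k).choose k : ℝ≥0∞) * a ^ p.1 * a ^ p.2 := by
      have hpow : ∀ p ∈ antidiagonal n, ((p.1 + k).choose k : ℝ≥0∞) * a ^ p.1 * a ^ p.2 =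
          ((p.1 + k).choose k : ℝ≥0∞) * a ^ n := fun p hp => by
        rw [mul_assoc, ← pow_add, mem_antidiagonal.mp hp]
      rw [sum_congr rfl hpow, ← sum_mul, ← Nat.cast_sum,
        Nat.sum_antidiagonal_eq_sum_range_succ_mk (fun p => (p.1 + k).choose k),
        Nat.sum_range_add_choose, add_assoc]
    rw [tsum_congr hpascal, tsum_sum_antidiagonal_eq_tsum_prod, ENNReal.tsum_prod']
    simp_rw [ENNReal.tsum_mul_left, ENNReal.tsum_geometric, ENNReal.tsum_mul_right, ih, pow_succ]

theorem natCast_choose_succ_div (n k : ℕ) :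
    ((n + 1).choose (k + 1) : ℝ≥0∞) / (n + 1 : ℕ) = n.choose k / (k + 1 : ℕ) := by
  rw [ENNReal.div_eq_div_iff (by simp) (natCast_ne_top _) (by simp) (natCast_ne_top _)]
  exact_mod_cast (mul_comm _ _).trans (Nat.add_one_mul_choose_eq n k).symm

theorem tsum_pow_succ_div_eq_ofReal_neg_log {α : ℝ≥0} (hα : α < 1) :
    ∑' k : ℕ, (α : ℝ≥0∞) ^ (k + 1) / ((k + 1 : ℕ) : ℝ≥0∞) =
      ENNReal.ofReal (-Real.log (1 - α)) := by
  have hlog := Real.hasSum_pow_div_log_of_abs_lt_one (x := α)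
    (by rw [abs_of_nonneg α.coe_nonneg]; exact_mod_cast hα)
  rw [← hlog.tsum_eq, ENNReal.ofReal_tsum_of_nonneg (fun n => by positivity) hlog.summable]
  refine tsum_congr fun n => ?_
  rw [ENNReal.ofReal_div_of_pos (by positivity), ENNReal.ofReal_pow α.coe_nonneg,
    ENNReal.ofReal_coe_nnreal]
  norm_cast

theorem sum_binomial_mix_div_succ (a b : ℝ≥0∞) (u : ℕ → ℝ≥0∞) (k : ℕ) :
    (∑ p ∈ antidiagonal (k + 1),
        ((k + 1).choose p.1 : ℝ≥0∞) * b ^ p.1 * a ^ p.2 * u p.1) / ((k + 1 : ℕ) : ℝ≥0∞) =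
      a ^ (k + 1) / ((k + 1 : ℕ) : ℝ≥0∞) * u 0 + ∑ p ∈ antidiagonal k,
        ((p.2 + p.1).choose p.1 : ℝ≥0∞) * a ^ p.2 *
          (b ^ (p.1 + 1) * (u (p.1 + 1) / ((p.1 + 1 : ℕ) : ℝ≥0∞))) := by
  simp only [Nat.sum_antidiagonal_succ, div_eq_mul_inv, add_mul, sum_mul]
  congr 1
  · simp only [Nat.choose_zero_right, Nat.cast_one, pow_zero, one_mul]
    ring
  · refine sum_congr rfl fun p hp => ?_
    rw [← mem_antidiagonal.mp hp, add_comm p.2]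
    calc ((p.1 + p.2 + 1).choose (p.1 + 1) : ℝ≥0∞) * b ^ (p.1 + 1) * a ^ p.2 * u (p.1 + 1) /
          ((p.1 + p.2 + 1 : ℕ) : ℝ≥0∞)
        = ((p.1 + p.2 + 1).choose (p.1 + 1) : ℝ≥0∞) / ((p.1 + p.2 + 1 : ℕ) : ℝ≥0∞) *
            (b ^ (p.1 + 1) * a ^ p.2 * u (p.1 + 1)) := by
          simp only [div_eq_mul_inv]; ring
      _ = _ := by
          rw [natCast_choose_succ_div]
          simp only [div_eq_mul_inv]; ring

theorem tsum_binomial_mix_div_succ {a : ℝ≥0∞} (ha : a < 1) (u : ℕ → ℝ≥0∞) :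
    ∑' k : ℕ, (∑ p ∈ antidiagonal (k + 1),
        ((k + 1).choose p.1 : ℝ≥0∞) * (1 - a) ^ p.1 * a ^ p.2 * u p.1) / ((k + 1 : ℕ) : ℝ≥0∞) =
      (∑' k : ℕ, a ^ (k + 1) / ((k + 1 : ℕ) : ℝ≥0∞)) * u 0 +
        ∑' k : ℕ, u (k + 1) / ((k + 1 : ℕ) : ℝ≥0∞) := by
  have hb : 1 - a ≠ 0 := (tsub_pos_of_lt ha).ne'
  have hb' : 1 - a ≠ ∞ := ne_top_of_le_ne_top one_ne_top tsub_le_self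
  simp_rw [sum_binomial_mix_div_succ]
  rw [ENNReal.tsum_add, ENNReal.tsum_mul_right, tsum_sum_antidiagonal_eq_tsum_prod,
    ENNReal.tsum_prod']
  congr 1
  refine tsum_congr fun i => ?_
  dsimp only
  rw [ENNReal.tsum_mul_right, tsum_choose_mul_pow, ← mul_assoc, ← mul_pow,
    ENNReal.inv_mul_cancel hb hb', one_pow, one_mul]

end ENNReal

section MarkovOperator

variable {V : Type*}

/- Working in the semiring `Module.End ℝ≥0∞ (V → ℝ≥0∞)` makes the binomial theorem available
for `Q = b • P + a • 1`. -/
noncomputable def markovOp (P : V → V → ℝ≥0∞) : Module.End ℝ≥0∞ (V → ℝ≥0∞) where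
  toFun f x := ∑' z, P x z * f z
  map_add' f g := by ext x; simp only [Pi.add_apply, mul_add, ENNReal.tsum_add]
  map_smul' c f := by
    ext x
    simp only [Pi.smul_apply, smul_eq_mul, mul_left_comm, ENNReal.tsum_mul_left, RingHom.id_apply]

theorem markovOp_apply (P : V → V → ℝ≥0∞) (f : V → ℝ≥0∞) (x : V) :
    markovOp P f x = ∑' z, P x z * f z := rfl

variable [DecidableEq V]

theorem kpow_eq_markovOp_pow_apply (P : V → V → ℝ≥0∞) (n : ℕ) (x y : V) :
    kpow P n x y = (markovOp P ^ n) (Pi.single y 1) x := by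
  induction n generalizing x with
  | zero => simp [kpow, Pi.single_apply]
  | succ n ih => simp only [kpow, pow_succ', Module.End.mul_apply, markovOp_apply, ih]

theorem markovOp_eq_smul_add_smul_one {P Q : V → V → ℝ≥0∞} {a b : ℝ≥0∞}
    (hQ : ∀ x y, Q x y = a * (if x = y then 1 else 0) + b * P x y) :
    markovOp Q = b • markovOp P + a • 1 := by
  ext f x
  simp only [markovOp_apply, hQ, mul_ite, mul_one, mul_zero, add_mul, ite_mul, zero_mul,
    mul_assoc, ENNReal.tsum_add, tsum_ite_eq', ENNReal.tsum_mul_left, LinearMap.add_apply,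
    LinearMap.smul_apply, Module.End.one_apply, Pi.add_apply, Pi.smul_apply, smul_eq_mul]
  ring

theorem kpow_eq_sum_antidiagonal {P Q : V → V → ℝ≥0∞} {a b : ℝ≥0∞}
    (hQ : ∀ x y, Q x y = a * (if x = y then 1 else 0) + b * P x y) (n : ℕ) (x y : V) :
    kpow Q n x y =
      ∑ p ∈ antidiagonal n, (n.choose p.1 : ℝ≥0∞) * b ^ p.1 * a ^ p.2 * kpow P p.1 x y := by
  have hcomm : Commute (b • markovOp P) (a • 1) := ((Commute.one_right _).smul_right a).smul_left b
  simp only [kpow_eq_markovOp_pow_apply, markovOp_eq_smul_add_smul_one hQ, hcomm.add_pow',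
    smul_pow, one_pow, Algebra.mul_smul_comm, mul_one, nsmul_eq_mul, LinearMap.coe_sum,
    LinearMap.coe_smul, Finset.sum_apply, Pi.smul_apply, Module.End.mul_apply,
    Module.End.natCast_apply, Pi.mul_apply, Pi.natCast_apply, smul_eq_mul]
  exact sum_congr rfl fun p _ => by ring

end MarkovOperator

theorem stmt3_general {V : Type*} [DecidableEq V] (P Q : V → V → ℝ≥0∞)
    (α : ℝ≥0) (hα : α < 1)
    (hQ : ∀ x y, Q x y = (α : ℝ≥0∞) * (if x = y then 1 else 0) + (1 - (α : ℝ≥0∞)) * P x y)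
    (x : V) :
    ∑' k : ℕ, kpow Q (k + 1) x x / ((k + 1 : ℕ) : ℝ≥0∞) =
      ENNReal.ofReal (-Real.log (1 - (α : ℝ))) +
        ∑' k : ℕ, kpow P (k + 1) x x / ((k + 1 : ℕ) : ℝ≥0∞) := by
  simp_rw [kpow_eq_sum_antidiagonal hQ]
  rw [ENNReal.tsum_binomial_mix_div_succ (ENNReal.coe_lt_one_iff.mpr hα) fun j => kpow P j x x,
    ENNReal.tsum_pow_succ_div_eq_ofReal_neg_log hα]
  simp [kpow]

/-- Proposition: if `P` is a transition matrix on a countable state space, `α ∈ [0,1)`, and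
`Q := αI + (1-α)P`, then the return probabilities satisfy
`∑_{k≥1} q_k(x)/k = -log(1-α) + ∑_{k≥1} p_k(x)/k`, as an identity in `[0,∞]`. -/
theorem stmt3 {V : Type*} [Countable V] [DecidableEq V] (P Q : V → V → ℝ≥0∞)
    (hP : ∀ x, ∑' y, P x y = 1) (α : ℝ≥0) (hα : α < 1)
    (hQ : ∀ x y, Q x y = (α : ℝ≥0∞) * (if x = y then 1 else 0) + (1 - (α : ℝ≥0∞)) * P x y)
    (x : V) :
    ∑' k : ℕ, kpow Q (k + 1) x x / ((k + 1 : ℕ) : ℝ≥0∞) =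
      ENNReal.ofReal (-Real.log (1 - (α : ℝ))) +
        ∑' k : ℕ, kpow P (k + 1) x x / ((k + 1 : ℕ) : ℝ≥0∞) :=
  stmt3_general P Q α hα hQ x
end

section
/- Let Y be a finite set, m a positive integer, and α := m/|Y|. Suppose μ is a probability measure on 2^Y × 2^Y supported on pairs (ω₁, ω₂) with |ω₁ Δ ω₂| ≤ m, with coordinate marginals μ₁ and μ₂. Then |H(μ₁) - H(μ₂)| ≤ log ∑_{k=0}^m C(|Y|,k) ≤ |Y|·(-α log α - (1-α) log(1-α)), where H denotes Shannon entropy. -/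
open Finset

/-- Shannon entropy of a probability mass function on a finite type. -/
noncomputable def shEnt {X : Type*} [Fintype X] (f : X → ℝ) : ℝ :=
  -∑ x : X, f x * Real.log (f x)

lemma aux_cond_ent {ι : Type*} [Fintype ι] [DecidableEq ι] (a : ι → ℝ)
    (hnn : ∀ i, 0 ≤ a i) (N : ℕ)
    (hN : (Finset.univ.filter (fun i => a i ≠ 0)).card ≤ N) :
    ∑ i, a i * (Real.log (∑ j, a j) - Real.log (a i)) ≤ (∑ j, a j) * Real.log N := by
  set q := ∑ j, a j with hq
  set S := Finset.univ.filter (fun i => a i ≠ 0) with hS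
  have hqS : ∑ i ∈ S, a i = q := by
    rw [hq, hS]; exact Finset.sum_filter_ne_zero _
  have hrestrict : ∑ i, a i * (Real.log q - Real.log (a i))
      = ∑ i ∈ S, a i * (Real.log q - Real.log (a i)) := by
    rw [eq_comm]
    apply Finset.sum_subset (Finset.subset_univ S)
    intro i _ hi
    have : a i = 0 := by
      by_contra h
      exact hi (Finset.mem_filter.2 ⟨Finset.mem_univ i, h⟩)
    simp [this]
  rcases Finset.eq_empty_or_nonempty S with hSe | hSne
  · have hq0 : q = 0 := by rw [← hqS, hSe]; simp
    rw [hrestrict, hSe, hq0]; simp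
  · have hNpos : 0 < N := lt_of_lt_of_le (Finset.card_pos.2 hSne) hN
    have hapos : ∀ i ∈ S, 0 < a i := by
      intro i hi
      exact (hnn i).lt_of_ne (Ne.symm (Finset.mem_filter.1 hi).2)
    have hqpos : 0 < q := by
      rw [← hqS]
      exact Finset.sum_pos hapos hSne
    have key : ∀ i ∈ S, a i * (Real.log q - Real.log (a i))
        ≤ q / N - a i + a i * Real.log N := by
      intro i hi
      have hai := hapos i hi
      have hNr : (0:ℝ) < N := Nat.cast_pos.2 hNpos
      have hx : (0:ℝ) < q / (a i * N) := by positivity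
      have hlog : Real.log (q / (a i * N)) = Real.log q - Real.log (a i) - Real.log N := by
        rw [Real.log_div (ne_of_gt hqpos) (by positivity),
          Real.log_mul (ne_of_gt hai) (ne_of_gt hNr)]
        ring
      have h2 := Real.log_le_sub_one_of_pos hx
      rw [hlog] at h2
      have h3 : a i * (Real.log q - Real.log (a i) - Real.log N)
          ≤ a i * (q / (a i * N) - 1) := mul_le_mul_of_nonneg_left h2 hai.le
      have h4 : a i * (q / (a i * N) - 1) = q / N - a i := by
        field_simp
      nlinarith [h4 ▸ h3]
    have hsumle := Finset.sum_le_sum key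
    have hRHS : ∑ i ∈ S, (q / N - a i + a i * Real.log N)
        = S.card * (q / N) - q + q * Real.log N := by
      rw [Finset.sum_add_distrib, Finset.sum_sub_distrib, ← Finset.sum_mul, hqS]
      simp [Finset.sum_const, nsmul_eq_mul]
    have hcard : (S.card : ℝ) * (q / N) ≤ q := by
      have hNr : (0:ℝ) < N := Nat.cast_pos.2 hNpos
      have : (S.card : ℝ) ≤ N := Nat.cast_le.2 hN
      calc (S.card : ℝ) * (q / N) ≤ N * (q / N) :=
            mul_le_mul_of_nonneg_right this (by positivity)
        _ = q := by field_simp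
    rw [hrestrict]
    calc ∑ i ∈ S, a i * (Real.log q - Real.log (a i))
        ≤ ∑ i ∈ S, (q / N - a i + a i * Real.log N) := hsumle
      _ = S.card * (q / N) - q + q * Real.log N := hRHS
      _ ≤ q * Real.log N := by linarith

lemma aux_marg_le {ι κ : Type*} [Fintype ι] [Fintype κ] (μ : ι × κ → ℝ)
    (hnn : ∀ p, 0 ≤ μ p) :
    shEnt (fun s => ∑ t, μ (s, t)) ≤ shEnt μ := by
  unfold shEnt
  rw [neg_le_neg_iff, Fintype.sum_prod_type]
  apply Finset.sum_le_sum
  intro s _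
  rw [Finset.sum_mul]
  apply Finset.sum_le_sum
  intro t _
  by_cases h : μ (s, t) = 0
  · simp [h]
  · have hpos : 0 < μ (s, t) := (hnn _).lt_of_ne (Ne.symm h)
    apply mul_le_mul_of_nonneg_left _ (hnn _)
    apply Real.log_le_log hpos
    exact Finset.single_le_sum (fun t' _ => hnn (s, t')) (Finset.mem_univ t)

lemma aux_joint_le {ι κ : Type*} [Fintype ι] [Fintype κ] [DecidableEq ι] (μ : ι × κ → ℝ)
    (hnn : ∀ p, 0 ≤ μ p) (hsum : ∑ p : ι × κ, μ p = 1) (N : ℕ)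
    (hN : ∀ t, (Finset.univ.filter (fun s => μ (s, t) ≠ 0)).card ≤ N) :
    shEnt μ ≤ shEnt (fun t => ∑ s, μ (s, t)) + Real.log N := by
  unfold shEnt
  have hA : ∑ p : ι × κ, μ p * Real.log (μ p)
      = ∑ t, ∑ s, μ (s, t) * Real.log (μ (s, t)) := Fintype.sum_prod_type_right _
  have hsum' : ∑ t, ∑ s, μ (s, t) = 1 := by
    rw [← Fintype.sum_prod_type_right]; exact hsum
  have key : ∀ t, ∑ s, μ (s, t) * (Real.log (∑ s', μ (s', t)) - Real.log (μ (s, t)))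
      ≤ (∑ s, μ (s, t)) * Real.log N := fun t =>
    aux_cond_ent (fun s => μ (s, t)) (fun s => hnn _) N (hN t)
  have e1 : ∀ t, ∑ s, μ (s, t) * (Real.log (∑ s', μ (s', t)) - Real.log (μ (s, t)))
      = (∑ s, μ (s, t)) * Real.log (∑ s', μ (s', t))
        - ∑ s, μ (s, t) * Real.log (μ (s, t)) := by
    intro t
    simp only [mul_sub, Finset.sum_sub_distrib, Finset.sum_mul]
  have total : ∑ t, ((∑ s, μ (s, t)) * Real.log (∑ s', μ (s', t))
      - ∑ s, μ (s, t) * Real.log (μ (s, t)))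
      ≤ ∑ t, (∑ s, μ (s, t)) * Real.log N := by
    apply Finset.sum_le_sum
    intro t _
    rw [← e1 t]; exact key t
  rw [Finset.sum_sub_distrib, ← Finset.sum_mul, hsum', one_mul] at total
  rw [hA]
  linarith

lemma count_ball {Y : Type*} [Fintype Y] [DecidableEq Y] (m : ℕ) (t : Finset Y) :
    (Finset.univ.filter (fun s : Finset Y => (symmDiff s t).card ≤ m)).card
      = ∑ k ∈ Finset.range (m + 1), (Fintype.card Y).choose k := by
  have hbij : (Finset.univ.filter (fun s : Finset Y => (symmDiff s t).card ≤ m)).card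
      = (Finset.univ.filter (fun d : Finset Y => d.card ≤ m)).card := by
    apply Finset.card_bij' (fun s _ => symmDiff s t) (fun d _ => symmDiff d t)
    · intro s hs
      simp only [Finset.mem_filter, Finset.mem_univ, true_and] at hs ⊢
      exact hs
    · intro d hd
      simp only [Finset.mem_filter, Finset.mem_univ, true_and] at hd ⊢
      rwa [symmDiff_symmDiff_cancel_right]
    · intro s _
      exact symmDiff_symmDiff_cancel_right t s
    · intro d _
      exact symmDiff_symmDiff_cancel_right t d
  rw [hbij]
  have hsplit : Finset.univ.filter (fun d : Finset Y => d.card ≤ m)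
      = (Finset.range (m + 1)).biUnion
          (fun k => Finset.univ.filter (fun d : Finset Y => d.card = k)) := by
    ext d
    simp [Nat.lt_succ_iff]
  rw [hsplit, Finset.card_biUnion]
  · apply Finset.sum_congr rfl
    intro k _
    have : Finset.univ.filter (fun d : Finset Y => d.card = k)
        = (Finset.univ : Finset Y).powersetCard k := by
      ext d
      simp [Finset.mem_powersetCard, Finset.subset_univ]
    rw [this, Finset.card_powersetCard, Finset.card_univ]
  · intro i _ j _ hij
    simp only [Finset.disjoint_left, Finset.mem_filter]
    rintro d ⟨_, h1⟩ ⟨_, h2⟩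
    exact hij (h1 ▸ h2 ▸ rfl)

lemma part2 (m n : ℕ) (hm : 0 < m) (hm2 : 2 * m ≤ n) :
    Real.log (∑ k ∈ Finset.range (m + 1), ((n.choose k : ℝ))) ≤
      (n : ℝ) * (-((m : ℝ) / n) * Real.log ((m : ℝ) / n) -
        (1 - (m : ℝ) / n) * Real.log (1 - (m : ℝ) / n)) := by
  have hn : 0 < n := lt_of_lt_of_le (by omega) hm2
  have hmn : m ≤ n := by omega
  set α : ℝ := (m : ℝ) / n with hαdef
  have hnR : (0:ℝ) < n := Nat.cast_pos.2 hn
  have hα0 : 0 < α := by positivity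
  have hαhalf : α ≤ 1/2 := by
    rw [hαdef, div_le_iff₀ hnR]
    have : (2:ℝ) * m ≤ n := by exact_mod_cast hm2
    linarith
  have h1α : 0 < 1 - α := by linarith
  have hαle : α ≤ 1 - α := by linarith
  set P : ℝ := α ^ m * (1 - α) ^ (n - m) with hPdef
  have hP0 : 0 < P := by positivity
  -- binomial theorem
  have hbin : ∑ k ∈ Finset.range (n + 1), α ^ k * (1 - α) ^ (n - k) * (n.choose k : ℝ) = 1 := by
    have := add_pow α (1 - α) n
    simp only [add_sub_cancel, one_pow] at this
    exact this.symm
  have hterm : ∀ k ∈ Finset.range (m + 1), P * (n.choose k : ℝ)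
      ≤ α ^ k * (1 - α) ^ (n - k) * (n.choose k : ℝ) := by
    intro k hk
    have hkm : k ≤ m := Nat.lt_succ_iff.1 (Finset.mem_range.1 hk)
    have hPle : P ≤ α ^ k * (1 - α) ^ (n - k) := by
      have e1 : α ^ m = α ^ k * α ^ (m - k) := by
        rw [← pow_add]; congr 1; omega
      have e2 : (1 - α) ^ (n - k) = (1 - α) ^ (n - m) * (1 - α) ^ (m - k) := by
        rw [← pow_add]; congr 1; omega
      have hpow : α ^ (m - k) ≤ (1 - α) ^ (m - k) := pow_le_pow_left₀ hα0.le hαle _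
      rw [hPdef, e1, e2]
      have h1 : α ^ k * α ^ (m - k) * (1 - α) ^ (n - m)
          ≤ α ^ k * (1 - α) ^ (m - k) * (1 - α) ^ (n - m) := by
        apply mul_le_mul_of_nonneg_right _ (by positivity)
        exact mul_le_mul_of_nonneg_left hpow (by positivity)
      calc α ^ k * α ^ (m - k) * (1 - α) ^ (n - m)
          ≤ α ^ k * (1 - α) ^ (m - k) * (1 - α) ^ (n - m) := h1
        _ = α ^ k * ((1 - α) ^ (n - m) * (1 - α) ^ (m - k)) := by ring
    exact mul_le_mul_of_nonneg_right hPle (Nat.cast_nonneg _)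
  have hNP : (∑ k ∈ Finset.range (m + 1), (n.choose k : ℝ)) * P ≤ 1 := by
    calc (∑ k ∈ Finset.range (m + 1), (n.choose k : ℝ)) * P
        = ∑ k ∈ Finset.range (m + 1), P * (n.choose k : ℝ) := by
          rw [Finset.sum_mul]; exact Finset.sum_congr rfl (fun k _ => by ring)
      _ ≤ ∑ k ∈ Finset.range (m + 1), α ^ k * (1 - α) ^ (n - k) * (n.choose k : ℝ) :=
          Finset.sum_le_sum hterm
      _ ≤ ∑ k ∈ Finset.range (n + 1), α ^ k * (1 - α) ^ (n - k) * (n.choose k : ℝ) := by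
          apply Finset.sum_le_sum_of_subset_of_nonneg
          · exact Finset.range_subset_range.2 (by omega)
          · intro k _ _; positivity
      _ = 1 := hbin
  have hNpos : (0:ℝ) < ∑ k ∈ Finset.range (m + 1), (n.choose k : ℝ) := by
    apply Finset.sum_pos
    · intro k hk
      have hkm : k ≤ m := Nat.lt_succ_iff.1 (Finset.mem_range.1 hk)
      exact_mod_cast Nat.choose_pos (le_trans hkm hmn)
    · exact ⟨0, Finset.mem_range.2 (by omega)⟩
  have hNle : (∑ k ∈ Finset.range (m + 1), (n.choose k : ℝ)) ≤ 1 / P :=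
    (le_div_iff₀ hP0).2 hNP
  have hlog : Real.log (∑ k ∈ Finset.range (m + 1), (n.choose k : ℝ)) ≤ -Real.log P := by
    have := Real.log_le_log hNpos hNle
    rwa [Real.log_div one_ne_zero (ne_of_gt hP0), Real.log_one, zero_sub] at this
  have hlogP : Real.log P = m * Real.log α + ((n - m : ℕ) : ℝ) * Real.log (1 - α) := by
    rw [hPdef, Real.log_mul (by positivity) (by positivity), Real.log_pow, Real.log_pow]
  have hc : ((n - m : ℕ) : ℝ) = (n : ℝ) - m := by
    rw [Nat.cast_sub hmn]
  have e1 : (n : ℝ) * α = m := by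
    rw [hαdef]; field_simp
  have hfinal : -Real.log P = (n : ℝ) * (-α * Real.log α - (1 - α) * Real.log (1 - α)) := by
    rw [hlogP, hc, hαdef]
    field_simp
    ring
  rw [← hfinal]
  exact hlog

/-- Proposition: let `Y` be a finite set, `m` a positive integer, `α := m/|Y|`. If `μ` is a
probability measure on `2^Y × 2^Y` supported on pairs with `|ω₁ Δ ω₂| ≤ m`, with marginals
`μ₁, μ₂`, then `|H(μ₁) - H(μ₂)| ≤ log ∑_{k≤m} C(|Y|,k) ≤ |Y|(-α log α - (1-α) log(1-α))`. -/
theorem stmt6 {Y : Type*} [Fintype Y] [DecidableEq Y] (m : ℕ) (hm : 0 < m)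
    (hm2 : 2 * m ≤ Fintype.card Y)
    (μ : Finset Y × Finset Y → ℝ)
    (hnn : ∀ p, 0 ≤ μ p) (hsum : ∑ p : Finset Y × Finset Y, μ p = 1)
    (hsupp : ∀ p : Finset Y × Finset Y, μ p ≠ 0 → (symmDiff p.1 p.2).card ≤ m) :
    |shEnt (fun s => ∑ t : Finset Y, μ (s, t)) - shEnt (fun t => ∑ s : Finset Y, μ (s, t))| ≤
        Real.log (∑ k ∈ Finset.range (m + 1), ((Fintype.card Y).choose k : ℝ)) ∧
      Real.log (∑ k ∈ Finset.range (m + 1), ((Fintype.card Y).choose k : ℝ)) ≤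
        (Fintype.card Y : ℝ) *
          (-((m : ℝ) / Fintype.card Y) * Real.log ((m : ℝ) / Fintype.card Y) -
            (1 - (m : ℝ) / Fintype.card Y) * Real.log (1 - (m : ℝ) / Fintype.card Y)) := by
  set Nn : ℕ := ∑ k ∈ Finset.range (m + 1), (Fintype.card Y).choose k with hNn
  have hcast : (∑ k ∈ Finset.range (m + 1), ((Fintype.card Y).choose k : ℝ)) = (Nn : ℝ) := by
    rw [hNn]; push_cast; rfl
  constructor
  · rw [hcast, abs_sub_le_iff]
    constructor
    · have h1 := aux_marg_le μ hnn
      have hsupp1 : ∀ t, (Finset.univ.filter (fun s => μ (s, t) ≠ 0)).card ≤ Nn := by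
        intro t
        rw [hNn, ← count_ball m t]
        apply Finset.card_le_card
        intro s hs
        simp only [Finset.mem_filter, Finset.mem_univ, true_and] at hs ⊢
        exact hsupp (s, t) hs
      have h2 := aux_joint_le μ hnn hsum Nn hsupp1
      linarith
    · set ν : Finset Y × Finset Y → ℝ := fun p => μ (p.2, p.1) with hν
      have hsumν : ∑ p : Finset Y × Finset Y, ν p = 1 := by
        rw [← hsum]
        exact Fintype.sum_equiv (Equiv.prodComm _ _) ν μ (fun p => rfl)
      have hsupp2 : ∀ t, (Finset.univ.filter (fun s => ν (s, t) ≠ 0)).card ≤ Nn := by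
        intro t
        rw [hNn, ← count_ball m t]
        apply Finset.card_le_card
        intro s hs
        simp only [Finset.mem_filter, Finset.mem_univ, true_and] at hs ⊢
        rw [symmDiff_comm]
        exact hsupp (t, s) hs
      have h1 := aux_marg_le ν (fun p => hnn _)
      have h2 := aux_joint_le ν (fun p => hnn _) hsumν Nn hsupp2
      have e1 : shEnt (fun s => ∑ t : Finset Y, ν (s, t))
          = shEnt (fun t => ∑ s : Finset Y, μ (s, t)) := rfl
      have e2 : shEnt (fun t => ∑ s : Finset Y, ν (s, t))
          = shEnt (fun s => ∑ t : Finset Y, μ (s, t)) := rfl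
      rw [e1] at h1
      rw [e2] at h2
      linarith
  · exact part2 m (Fintype.card Y) hm hm2
end

section
/- Let T be the regular tree of degree d ≥ 3 with return probability generating function 𝒢(z) = 2(d-1)/(d-2+√(d²-4(d-1)z²)). Then the tree entropy h(T) := log d - ∑_{k≥1} p_k(o;T)/k satisfies h(T) = log( (d-1)^{d-1} / (d(d-2))^{d/2-1} ). -/
/-!
On `[0, 1]` the integrand `(𝒢(z) - 1) / z` is, after rationalizing with
`s = √(d² - 4(d-1)z²)`, the function `2z / (s + d - 2z²)`, which has the elementary primitive
`((d-2)/2) log(s + d - 2) - (d/2) log(s + d)`. Since `s = d` at `z = 0` and `s = d - 2` at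
`z = 1`, the fundamental theorem of calculus evaluates the integral in closed form.
-/

open Real Set intervalIntegral

noncomputable def discSqrt (c z : ℝ) : ℝ := √(c ^ 2 - 4 * (c - 1) * z ^ 2)

section

variable {c z : ℝ}

lemma continuous_discSqrt : Continuous (discSqrt c) := by
  unfold discSqrt
  fun_prop

lemma sq_sub_two_le_disc (hc : 1 ≤ c) (hz : z ∈ Icc (0 : ℝ) 1) :
    (c - 2) ^ 2 ≤ c ^ 2 - 4 * (c - 1) * z ^ 2 := by
  have hz2 : z ^ 2 ≤ 1 := by nlinarith [hz.1, hz.2]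
  nlinarith

lemma discSqrt_sq (hc : 1 ≤ c) (hz : z ∈ Icc (0 : ℝ) 1) :
    discSqrt c z ^ 2 = c ^ 2 - 4 * (c - 1) * z ^ 2 :=
  sq_sqrt ((sq_nonneg _).trans (sq_sub_two_le_disc hc hz))

lemma sub_two_le_discSqrt (hc : 2 ≤ c) (hz : z ∈ Icc (0 : ℝ) 1) : c - 2 ≤ discSqrt c z := by
  have h := sqrt_le_sqrt (sq_sub_two_le_disc (by linarith) hz)
  rwa [sqrt_sq (sub_nonneg.2 hc)] at h

lemma discSqrt_zero (hc : 0 ≤ c) : discSqrt c 0 = c := by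
  simp [discSqrt, sqrt_sq hc]

lemma discSqrt_one (hc : 2 ≤ c) : discSqrt c 1 = c - 2 := by
  rw [discSqrt, show c ^ 2 - 4 * (c - 1) * 1 ^ 2 = (c - 2) ^ 2 by ring,
    sqrt_sq (sub_nonneg.2 hc)]

lemma discSqrt_add_sub_two_mul_sq_pos (hc : 2 < c) (hz : z ∈ Icc (0 : ℝ) 1) :
    0 < discSqrt c z + c - 2 * z ^ 2 := by
  have hz2 : z ^ 2 ≤ 1 := by nlinarith [hz.1, hz.2]
  linarith [sub_two_le_discSqrt hc.le hz]

/-- At `z = 0` both sides are `0` by the convention `x / 0 = 0`. -/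
lemma genFun_sub_one_div_eq (hc : 2 < c) (hz : z ∈ Icc (0 : ℝ) 1) :
    (2 * (c - 1) / (c - 2 + discSqrt c z) - 1) / z =
      2 * z / (discSqrt c z + c - 2 * z ^ 2) := by
  rcases eq_or_ne z 0 with rfl | hz0
  · simp
  have h₁ : c - 2 + discSqrt c z ≠ 0 := by linarith [sub_two_le_discSqrt hc.le hz]
  have h₂ := (discSqrt_add_sub_two_mul_sq_pos hc hz).ne'
  field_simp
  linear_combination (-1 : ℝ) * discSqrt_sq (by linarith) hz

lemma hasDerivAt_discSqrt (h : c ^ 2 - 4 * (c - 1) * z ^ 2 ≠ 0) :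
    HasDerivAt (discSqrt c) (-(4 * (c - 1) * z) / discSqrt c z) z := by
  have hdisc : HasDerivAt (fun z : ℝ => c ^ 2 - 4 * (c - 1) * z ^ 2) (-(8 * (c - 1) * z)) z := by
    refine (((hasDerivAt_pow 2 z).const_mul (4 * (c - 1))).const_sub (c ^ 2)).congr_deriv ?_
    push_cast
    ring
  refine ((hasDerivAt_sqrt h).comp z hdisc).congr_deriv ?_
  rw [discSqrt]
  field_simp
  ring

lemma hasDerivAt_primitive (hc : 2 < c) (hz : z ∈ Icc (0 : ℝ) 1) :
    HasDerivAt
      (fun z => (c - 2) / 2 * log (discSqrt c z + c - 2) - c / 2 * log (discSqrt c z + c))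
      (2 * z / (discSqrt c z + c - 2 * z ^ 2)) z := by
  have hs : 0 < discSqrt c z := by linarith [sub_two_le_discSqrt hc.le hz]
  have h₁ : 0 < discSqrt c z + c - 2 := by linarith
  have h₂ : 0 < discSqrt c z + c := by linarith
  have h₃ := discSqrt_add_sub_two_mul_sq_pos hc hz
  have hsq := discSqrt_sq (c := c) (by linarith) hz
  have hs' := hasDerivAt_discSqrt (by rw [← hsq]; positivity)
  have hlog₁ := ((hs'.add_const c).sub_const 2).log h₁.ne'
  have hlog₂ := (hs'.add_const c).log h₂.ne'
  refine ((hlog₁.const_mul ((c - 2) / 2)).sub (hlog₂.const_mul (c / 2))).congr_deriv ?_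
  field_simp
  linear_combination (-(4 * z * discSqrt c z)) * hsq

lemma integral_genFun_sub_one_div (hc : 2 < c) :
    ∫ z in (0 : ℝ)..1, (2 * (c - 1) / (c - 2 + discSqrt c z) - 1) / z =
      (c / 2 - 1) * log (c - 2) + c / 2 * log c - (c - 1) * log (c - 1) := by
  have hIcc : uIcc (0 : ℝ) 1 = Icc 0 1 := uIcc_of_le zero_le_one
  have hcont : ContinuousOn (fun z => 2 * z / (discSqrt c z + c - 2 * z ^ 2)) (Icc 0 1) :=
    ContinuousOn.div (by fun_prop) (continuous_discSqrt.continuousOn.add_const c |>.sub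
      (by fun_prop)) fun z hz => (discSqrt_add_sub_two_mul_sq_pos hc hz).ne'
  rw [integral_congr (fun z hz => genFun_sub_one_div_eq hc (hIcc ▸ hz)),
    integral_eq_sub_of_hasDerivAt (fun z hz => hasDerivAt_primitive hc (hIcc ▸ hz))
      (hcont.intervalIntegrable_of_Icc zero_le_one),
    discSqrt_one hc.le, discSqrt_zero (by linarith),
    show c - 2 + c - 2 = 2 * (c - 2) by ring, show c - 2 + c = 2 * (c - 1) by ring,
    show c + c - 2 = 2 * (c - 1) by ring, show c + c = 2 * c by ring,
    log_mul two_ne_zero (by linarith), log_mul two_ne_zero (by linarith),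
    log_mul two_ne_zero (by linarith)]
  ring

end

/-- Proposition: for the `d`-regular tree (`d ≥ 3`) with return probability generating
function `𝒢(z) = 2(d-1)/(d-2+√(d²-4(d-1)z²))`, the tree entropy
`h(T) = log d - ∑_{k≥1} p_k(o;T)/k = log d - ∫₀¹ (𝒢(z)-1)/z dz` equals
`log((d-1)^{d-1} / (d(d-2))^{d/2-1})`. -/
theorem stmt9 (d : ℕ) (hd : 3 ≤ d) (G : ℝ → ℝ)
    (hG : ∀ z : ℝ, G z =
      2 * ((d : ℝ) - 1) / ((d : ℝ) - 2 + Real.sqrt ((d : ℝ) ^ 2 - 4 * ((d : ℝ) - 1) * z ^ 2))) :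
    Real.log d - ∫ z in (0 : ℝ)..1, (G z - 1) / z =
      Real.log (((d : ℝ) - 1) ^ (d - 1) /
        (((d : ℝ) * ((d : ℝ) - 2)) ^ ((d : ℝ) / 2 - 1))) := by
  have hc : (2 : ℝ) < d := by exact_mod_cast hd
  have hG' : G = fun z => 2 * ((d : ℝ) - 1) / ((d : ℝ) - 2 + discSqrt d z) := funext hG
  rw [hG', integral_genFun_sub_one_div hc,
    log_div (pow_ne_zero _ (by linarith)) (rpow_pos_of_pos (by positivity) _).ne',
    log_pow, log_rpow (by positivity), log_mul (by positivity) (by linarith),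
    Nat.cast_sub (by omega)]
  push_cast
  ring
end

section
/- Let Φ : [0, R) → ℝ be strictly increasing with 𝒢(z) = Φ(z·𝒢(z)) on [0,R), where 𝒢 is the return probability generating function with radius of convergence considerations making z ↦ z𝒢(z) a valid change of variables. Then ∫₀¹ (𝒢(z)-1)/z dz = ∫₀^{𝒢(1)} (Φ(t)-1)/t dt - 𝒢(1) + 1 + log 𝒢(1). -/
open MeasureTheory Set

/-!
Let `Ψ := dslope Φ 0`, the continuous extension of `t ↦ (Φ t - 1) / t` (recall
`Φ 0 = 𝒢 0 = 1`), and `H z := ∫₀^{z 𝒢(z)} Ψ - 𝒢(z) + log 𝒢(z)`. By the functional equation,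
`Ψ (z 𝒢(z)) = (𝒢(z) - 1) / (z 𝒢(z))`, so on differentiating `H` the terms in `𝒢'` cancel and
`H' z = (𝒢(z) - 1) / z`. The identity is `H 1 - H 0`, with `H 0 = -1`.
-/

section PowerSeries

variable {p : ℕ → ℝ}

lemma continuousOn_tsum_mul_pow (hp : Summable p) :
    ContinuousOn (fun z : ℝ => ∑' k, p k * z ^ k) (Icc (-1) 1) := by
  refine continuousOn_tsum (fun k => (continuous_const.mul (continuous_pow k)).continuousOn)
    (summable_abs_iff.mpr hp) fun k z hz => ?_
  rw [norm_mul, norm_pow, Real.norm_eq_abs]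
  exact mul_le_of_le_one_right (abs_nonneg _) (pow_le_one₀ (norm_nonneg z) (abs_le.mpr hz))

lemma differentiableAt_tsum_mul_pow (hp : Summable p) {z : ℝ} (hz : |z| < 1) :
    DifferentiableAt ℝ (fun z : ℝ => ∑' k, p k * z ^ k) z := by
  set P := FormalMultilinearSeries.ofScalars ℝ p
  have hP : 1 ≤ P.radius := by
    simpa using P.le_radius_of_tendsto (r := 1) (l := 0)
      (by simpa [P, FormalMultilinearSeries.ofScalars_norm] using hp.tendsto_atTop_zero.norm)
  have hzP : z ∈ Metric.eball (0 : ℝ) P.radius := by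
    rw [Metric.mem_eball, edist_zero_right]
    exact lt_of_lt_of_le (by rwa [Real.enorm_eq_ofReal_abs, ENNReal.ofReal_lt_one]) hP
  have hPsum : P.sum = fun z : ℝ => ∑' k, p k * z ^ k :=
    FormalMultilinearSeries.ofScalarsSum_eq_tsum p
  rw [← hPsum]
  exact ((P.hasFPowerSeriesOnBall (zero_lt_one.trans_le hP)).analyticAt_of_mem hzP).differentiableAt

lemma le_tsum_mul_pow_of_nonneg (hnn : ∀ k, 0 ≤ p k) (hp : Summable p) {z : ℝ}
    (hz : z ∈ Icc (0 : ℝ) 1) : p 0 ≤ ∑' k, p k * z ^ k := by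
  have hsum : Summable fun k => p k * z ^ k :=
    Summable.of_nonneg_of_le (fun k => mul_nonneg (hnn k) (pow_nonneg hz.1 k))
      (fun k => mul_le_of_le_one_right (hnn k) (pow_le_one₀ hz.1 hz.2)) hp
  simpa using hsum.le_tsum 0 fun k _ => mul_nonneg (hnn k) (pow_nonneg hz.1 k)

end PowerSeries

section DSlope

variable {𝕜 E : Type*} [NontriviallyNormedField 𝕜] [NormedAddCommGroup E] [NormedSpace 𝕜 E]

lemma continuousOn_dslope_of_differentiableAt {f : 𝕜 → E} {s : Set 𝕜} {a : 𝕜}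
    (hf : ContinuousOn f s) (ha : DifferentiableAt 𝕜 f a) : ContinuousOn (dslope f a) s := by
  intro x hx
  rcases eq_or_ne x a with rfl | hxa
  · exact (continuousAt_dslope_same.2 ha).continuousWithinAt
  · exact (continuousWithinAt_dslope_of_ne hxa).2 (hf x hx)

end DSlope

lemma dslope_zero_eq_div {f : ℝ → ℝ} {c t : ℝ} (hf : f 0 = c) (ht : t ≠ 0) :
    dslope f 0 t = (f t - c) / t := by
  rw [dslope_of_ne _ ht, slope_def_field, sub_zero, hf]

lemma eqOn_dslope_zero_uIoo {f : ℝ → ℝ} {c : ℝ} (hf : f 0 = c) (b : ℝ) :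
    EqOn (dslope f 0) (fun t => (f t - c) / t) (uIoo 0 b) := fun _ ht =>
  dslope_zero_eq_div hf (ne_of_mem_of_not_mem ht left_notMem_uIoo)

lemma hasDerivAt_integral_dslope_comp_sub_add_log {Φ G : ℝ → ℝ} {z : ℝ}
    (hΨ : Continuous (dslope Φ 0)) (hΦ0 : Φ 0 = 1) (hz : z ≠ 0) (hGz : G z ≠ 0)
    (hG : DifferentiableAt ℝ G z) (hfe : G z = Φ (z * G z)) :
    HasDerivAt (fun z => (∫ s in (0 : ℝ)..z * G z, dslope Φ 0 s) - G z + Real.log (G z))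
      ((G z - 1) / z) z := by
  have hGd := hG.hasDerivAt
  have hF := (hΨ.integral_hasStrictDerivAt 0 (z * G z)).hasDerivAt.comp z
    ((hasDerivAt_id z).mul hGd)
  have hΨz : dslope Φ 0 (z * G z) = (G z - 1) / (z * G z) := by
    rw [dslope_zero_eq_div hΦ0 (mul_ne_zero hz hGz), ← hfe]
  refine ((hF.sub hGd).add ((Real.hasDerivAt_log hGz).comp z hGd)).congr_deriv ?_
  simp only [hΨz, id]
  field_simp
  ring

theorem integral_sub_one_div_eq_of_eq_comp_mul {Φ G : ℝ → ℝ} (hΦ : Continuous Φ)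
    (hΦ0 : DifferentiableAt ℝ Φ 0) (hGc : ContinuousOn G (Icc 0 1))
    (hGd : ∀ z ∈ Ico (0 : ℝ) 1, DifferentiableAt ℝ G z)
    (hGpos : ∀ z ∈ Icc (0 : ℝ) 1, 0 < G z) (hG0 : G 0 = 1)
    (hfe : ∀ z ∈ Icc (0 : ℝ) 1, G z = Φ (z * G z)) :
    ∫ z in (0 : ℝ)..1, (G z - 1) / z =
      (∫ t in (0 : ℝ)..G 1, (Φ t - 1) / t) - G 1 + 1 + Real.log (G 1) := by
  have hΦ1 : Φ 0 = 1 := by simpa [hG0] using (hfe 0 (left_mem_Icc.2 zero_le_one)).symm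
  have hΨ : Continuous (dslope Φ 0) :=
    continuousOn_univ.1 (continuousOn_dslope_of_differentiableAt hΦ.continuousOn hΦ0)
  set H := fun z => (∫ s in (0 : ℝ)..z * G z, dslope Φ 0 s) - G z + Real.log (G z)
  have hHc : ContinuousOn H (Icc 0 1) :=
    (((intervalIntegral.continuous_primitive (fun _ _ => hΨ.intervalIntegrable _ _) 0
      ).comp_continuousOn (continuousOn_id.mul hGc)).sub hGc).add
      (hGc.log fun z hz => (hGpos z hz).ne')
  have hH' : ∀ z ∈ Ioo (0 : ℝ) 1, HasDerivAt H ((G z - 1) / z) z := fun z hz =>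
    hasDerivAt_integral_dslope_comp_sub_add_log hΨ hΦ1 hz.1.ne'
      (hGpos z (Ioo_subset_Icc_self hz)).ne' (hGd z (Ioo_subset_Ico_self hz))
      (hfe z (Ioo_subset_Icc_self hz))
  have hint : IntervalIntegrable (fun z => (G z - 1) / z) volume 0 1 := by
    rw [← intervalIntegrable_congr_uIoo (eqOn_dslope_zero_uIoo hG0 1)]
    refine ContinuousOn.intervalIntegrable ?_
    rw [uIcc_of_le zero_le_one]
    exact continuousOn_dslope_of_differentiableAt hGc (hGd 0 (left_mem_Ico.2 zero_lt_one))
  rw [intervalIntegral.integral_eq_sub_of_hasDerivAt_of_le zero_le_one hHc hH' hint,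
    ← intervalIntegral.integral_congr_uIoo (eqOn_dslope_zero_uIoo hΦ1 (G 1))]
  simp only [H, one_mul, hG0, mul_one, intervalIntegral.integral_same, Real.log_one, add_zero,
    zero_sub, sub_neg_eq_add]
  ring

theorem stmt11_general (p : ℕ → ℝ) (hp0 : p 0 = 1) (hnn : ∀ k, 0 ≤ p k) (hsum : Summable p)
    (G : ℝ → ℝ) (hGdef : ∀ z : ℝ, G z = ∑' k : ℕ, p k * z ^ k)
    (Φ : ℝ → ℝ) (hC1 : ContDiff ℝ 1 Φ)
    (hfe : ∀ z ∈ Set.Icc (0 : ℝ) 1, G z = Φ (z * G z)) :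
    ∫ z in (0 : ℝ)..1, (G z - 1) / z =
      (∫ t in (0 : ℝ)..(G 1), (Φ t - 1) / t) - G 1 + 1 + Real.log (G 1) := by
  obtain rfl : G = fun z => ∑' k, p k * z ^ k := funext hGdef
  refine integral_sub_one_div_eq_of_eq_comp_mul hC1.continuous
    (hC1.differentiable one_ne_zero 0)
    ((continuousOn_tsum_mul_pow hsum).mono (Icc_subset_Icc_left (by norm_num)))
    (fun z hz => differentiableAt_tsum_mul_pow hsum (abs_lt.2 ⟨by linarith [hz.1], hz.2⟩))
    (fun z hz => (hp0.symm ▸ one_pos : 0 < p 0).trans_le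
      (le_tsum_mul_pow_of_nonneg hnn hsum hz)) ?_ hfe
  rw [tsum_eq_single 0 fun k hk => by simp [hk]]
  simp [hp0]

/-- Proposition: let `𝒢(z) = ∑_{k≥0} p_k z^k` with `p_0 = 1`, `p_k ≥ 0`, summable at `z = 1`,
and let `Φ` be a continuously differentiable strictly increasing function satisfying the
functional equation `𝒢(z) = Φ(z·𝒢(z))` on `[0,1]`. Then
`∫₀¹ (𝒢(z)-1)/z dz = ∫₀^{𝒢(1)} (Φ(t)-1)/t dt - 𝒢(1) + 1 + log 𝒢(1)`. -/
theorem stmt11 (p : ℕ → ℝ) (hp0 : p 0 = 1) (hnn : ∀ k, 0 ≤ p k) (hsum : Summable p)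
    (G : ℝ → ℝ) (hGdef : ∀ z : ℝ, G z = ∑' k : ℕ, p k * z ^ k)
    (Φ : ℝ → ℝ) (hmono : StrictMono Φ) (hC1 : ContDiff ℝ 1 Φ)
    (hfe : ∀ z ∈ Set.Icc (0 : ℝ) 1, G z = Φ (z * G z)) :
    ∫ z in (0 : ℝ)..1, (G z - 1) / z =
      (∫ t in (0 : ℝ)..(G 1), (Φ t - 1) / t) - G 1 + 1 + Real.log (G 1) :=
  stmt11_general p hp0 hnn hsum G hGdef Φ hC1 hfe
end

section
/- Let (G_n) be a sequence of finite graphs with vertex subsets W_n ⊆ V(G_n), v_n := |V(G_n)|, such that |W_n|/v_n → 0. For R > 0 and t > 0 set s_n(R,t) := |{x ∈ V(G_n) : |V_R(x)| > t}| and w_n(R) := |{x ∈ V(G_n) : V_R(x) ∩ W_n ≠ ∅}|, where V_R(x) is the vertex set of the ball of radius R about x. If for each R, lim_{t→∞} limsup_{n→∞} s_n(2R,t)/v_n = 0, then for each R, lim_{n→∞} w_n(R)/v_n = 0. -/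
open Filter Topology

/-- The ball of radius `R` about `x` in the graph `G` (vertices reachable from `x` within
graph distance `R`). -/
def gball {V : Type*} (G : SimpleGraph V) (x : V) (R : ℕ) : Set V :=
  {y | G.Reachable x y ∧ G.dist x y ≤ R}

/-!
If the `R`-ball about `x` meets `W` in `y`, then either the `R`-ball about `y` has at most `t`
vertices (and `x` is one of them), or it lies inside the `2R`-ball about `x`, which then has more
than `t` vertices. Hence `w_n(R) ≤ t |W_n| + s_n(2R, t)`. Dividing by `v_n`, the first term tends
to `0` for fixed `t`, and the limsup of the second is small once `t` is large.
-/

theorem Set.Finite.ncard_biUnion_le_mul {ι α : Type*} {s : Set ι} (hs : s.Finite)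
    (f : ι → Set α) {t : ℕ} (h : ∀ i ∈ s, (f i).ncard ≤ t) :
    (⋃ i ∈ s, f i).ncard ≤ t * s.ncard := by
  lift s to Finset ι using hs
  simpa [mul_comm] using (s.set_ncard_biUnion_le f).trans (s.sum_le_card_nsmul _ _ h)

section gball

variable {V : Type*} {G : SimpleGraph V}

theorem mem_gball_comm {x y : V} {R : ℕ} : y ∈ gball G x R ↔ x ∈ gball G y R := by
  simp only [gball, Set.mem_ofPred_eq, SimpleGraph.reachable_comm, SimpleGraph.dist_comm]

theorem gball_subset_gball_add {x y : V} {R R' : ℕ} (hy : y ∈ gball G x R) :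
    gball G y R' ⊆ gball G x (R + R') := fun _ ⟨hyz, hd⟩ =>
  ⟨hy.1.trans hyz, (hy.1.dist_triangle_left _).trans (add_le_add hy.2 hd)⟩

theorem ncard_gball_inter_nonempty_le [Finite V] (W : Set V) (R t : ℕ) :
    {x | (gball G x R ∩ W).Nonempty}.ncard ≤
      t * W.ncard + {x | t < (gball G x (2 * R)).ncard}.ncard := by
  set W' := {w ∈ W | (gball G w R).ncard ≤ t}
  have hsub : {x | (gball G x R ∩ W).Nonempty} ⊆
      (⋃ w ∈ W', gball G w R) ∪ {x | t < (gball G x (2 * R)).ncard} := by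
    rintro x ⟨y, hxy, hyW⟩
    by_cases hsmall : (gball G y R).ncard ≤ t
    · exact Or.inl (Set.mem_biUnion ⟨hyW, hsmall⟩ (mem_gball_comm.mp hxy))
    · refine Or.inr ((not_le.mp hsmall).trans_le (Set.ncard_le_ncard ?_))
      rw [two_mul]
      exact gball_subset_gball_add hxy
  calc {x | (gball G x R ∩ W).Nonempty}.ncard
      ≤ (⋃ w ∈ W', gball G w R).ncard + {x | t < (gball G x (2 * R)).ncard}.ncard :=
        (Set.ncard_le_ncard hsub).trans (Set.ncard_union_le _ _)
    _ ≤ t * W'.ncard + {x | t < (gball G x (2 * R)).ncard}.ncard := by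
        gcongr
        exact W'.toFinite.ncard_biUnion_le_mul _ fun w hw => hw.2
    _ ≤ t * W.ncard + {x | t < (gball G x (2 * R)).ncard}.ncard := by
        gcongr
        exacts [W.toFinite, Set.sep_subset _ _]

end gball

theorem tendsto_zero_of_le_mul_add {a b : ℕ → ℝ} {c : ℕ → ℕ → ℝ} (ha : ∀ n, 0 ≤ a n)
    (hb : Tendsto b atTop (𝓝 0)) (hc_bdd : ∀ t, IsBoundedUnder (· ≤ ·) atTop (c t))
    (hc : Tendsto (fun t => limsup (c t) atTop) atTop (𝓝 0))
    (hle : ∀ t n, a n ≤ t * b n + c t n) : Tendsto a atTop (𝓝 0) := by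
  refine tendsto_order.2 ⟨fun e he => .of_forall fun n => he.trans_le (ha n), fun ε hε => ?_⟩
  obtain ⟨t, ht⟩ := ((tendsto_order.1 hc).2 (ε / 2) (half_pos hε)).exists
  have htb : ∀ᶠ n in atTop, (t : ℝ) * b n < ε / 2 := by
    refine (tendsto_order.1 ?_).2 (ε / 2) (half_pos hε)
    simpa using hb.const_mul (t : ℝ)
  filter_upwards [htb, eventually_lt_of_limsup_lt ht (hc_bdd t)] with n hbn hcn
  linarith [hle t n]

theorem stmt18_general (V : ℕ → Type*) [∀ n, Fintype (V n)]
    (G : ∀ n, SimpleGraph (V n)) (W : ∀ n, Set (V n))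
    (v : ℕ → ℕ) (hv : ∀ n, v n = Fintype.card (V n))
    (hW : Tendsto (fun n => ((W n).ncard : ℝ) / v n) atTop (𝓝 0))
    (s : ℕ → ℕ → ℕ → ℕ)
    (hs : ∀ n R t, s n R t = Set.ncard {x : V n | t < (gball (G n) x R).ncard})
    (w : ℕ → ℕ → ℕ)
    (hw : ∀ n R, w n R = Set.ncard {x : V n | (gball (G n) x R ∩ W n).Nonempty})
    (hhyp : ∀ R : ℕ,
      Tendsto (fun t : ℕ => Filter.limsup (fun n => (s n (2 * R) t : ℝ) / v n) atTop)
        atTop (𝓝 0)) :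
    ∀ R : ℕ, Tendsto (fun n => (w n R : ℝ) / v n) atTop (𝓝 0) := by
  intro R
  have hs_le : ∀ n t, (s n (2 * R) t : ℝ) ≤ v n := fun n t => by
    rw [hs, hv, ← Nat.card_eq_fintype_card]
    exact_mod_cast Set.ncard_le_card _
  refine tendsto_zero_of_le_mul_add (fun n => by positivity) hW
    (fun t => isBoundedUnder_of ⟨1, fun n => div_le_one_of_le₀ (hs_le n t) (by positivity)⟩)
    (hhyp R) fun t n => ?_
  rw [mul_div_assoc', ← add_div, hw, hs]
  gcongr
  exact_mod_cast ncard_gball_inter_nonempty_le (W n) R t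

/-- Proposition: let `G n` be finite graphs with vertex subsets `W n`, `v n := |V(G n)|`,
with `|W n|/v n → 0`. Set `s n R t := #{x : |V_R(x)| > t}` and
`w n R := #{x : V_R(x) ∩ W n ≠ ∅}`. If for each `R`,
`lim_{t→∞} limsup_n s n (2R) t / v n = 0`, then for each `R`, `w n R / v n → 0`. -/
theorem stmt18 (V : ℕ → Type*) [∀ n, Fintype (V n)] [∀ n, Nonempty (V n)]
    (G : ∀ n, SimpleGraph (V n)) (W : ∀ n, Set (V n))
    (v : ℕ → ℕ) (hv : ∀ n, v n = Fintype.card (V n))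
    (hW : Tendsto (fun n => ((W n).ncard : ℝ) / v n) atTop (𝓝 0))
    (s : ℕ → ℕ → ℕ → ℕ)
    (hs : ∀ n R t, s n R t = Set.ncard {x : V n | t < (gball (G n) x R).ncard})
    (w : ℕ → ℕ → ℕ)
    (hw : ∀ n R, w n R = Set.ncard {x : V n | (gball (G n) x R ∩ W n).Nonempty})
    (hhyp : ∀ R : ℕ,
      Tendsto (fun t : ℕ => Filter.limsup (fun n => (s n (2 * R) t : ℝ) / v n) atTop)
        atTop (𝓝 0)) :
    ∀ R : ℕ, Tendsto (fun n => (w n R : ℝ) / v n) atTop (𝓝 0) :=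
  stmt18_general V G W v hv hW s hs w hw hhyp
end
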